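/- Let (u, ω, k) be a classical solution of the one-dimensional Kolmogorov two-equation model on [0,T] with k(t,x) ≥ 0 for all (t,x). Then there exists a constant C > 0, depending only on ν and α₄, such that for every t ∈ [0,T]: ‖k(t)‖_{L¹(Ω)} + ∫₀ᵗ ∫_Ω k ω dx dτ ≤ C ( ‖k(0)‖_{L¹(Ω)} + ‖u(0)‖²_{L²(Ω)} ). -/

import Mathlib

open MeasureTheory Real Set

noncomputable def pdt (f : ℝ → ℝ → ℝ) (t x : ℝ) : ℝ := deriv (fun s => f s x) t
noncomputable def pdx (f : ℝ → ℝ → ℝ) (t x : ℝ) : ℝ := deriv (fun y => f t y) x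

section AuxLemmas
variable {f : ℝ → ℝ → ℝ}

lemma hasDerivAt_slice_t (hf : ContDiff ℝ (⊤:ℕ∞) (Function.uncurry f)) (t x : ℝ) :
    HasDerivAt (fun s => f s x) (fderiv ℝ (Function.uncurry f) (t, x) (1, 0)) t := by
  have h1 : HasDerivAt (fun s : ℝ => ((s, x) : ℝ × ℝ)) (1, 0) t :=
    HasDerivAt.prodMk (hasDerivAt_id t) (hasDerivAt_const t x)
  exact ((hf.differentiable (by simp) (t, x)).hasFDerivAt).comp_hasDerivAt t h1

lemma hasDerivAt_slice_x (hf : ContDiff ℝ (⊤:ℕ∞) (Function.uncurry f)) (t x : ℝ) :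
    HasDerivAt (fun y => f t y) (fderiv ℝ (Function.uncurry f) (t, x) (0, 1)) x := by
  have h1 : HasDerivAt (fun y : ℝ => ((t, y) : ℝ × ℝ)) (0, 1) x :=
    HasDerivAt.prodMk (hasDerivAt_const x t) (hasDerivAt_id x)
  exact ((hf.differentiable (by simp) (t, x)).hasFDerivAt).comp_hasDerivAt x h1

lemma pdt_eq_fderiv (hf : ContDiff ℝ (⊤:ℕ∞) (Function.uncurry f)) (t x : ℝ) :
    pdt f t x = fderiv ℝ (Function.uncurry f) (t, x) (1, 0) :=
  (hasDerivAt_slice_t hf t x).deriv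

lemma pdx_eq_fderiv (hf : ContDiff ℝ (⊤:ℕ∞) (Function.uncurry f)) (t x : ℝ) :
    pdx f t x = fderiv ℝ (Function.uncurry f) (t, x) (0, 1) :=
  (hasDerivAt_slice_x hf t x).deriv

lemma hasDerivAt_pdt (hf : ContDiff ℝ (⊤:ℕ∞) (Function.uncurry f)) (t x : ℝ) :
    HasDerivAt (fun s => f s x) (pdt f t x) t := by
  rw [pdt_eq_fderiv hf]; exact hasDerivAt_slice_t hf t x

lemma hasDerivAt_pdx (hf : ContDiff ℝ (⊤:ℕ∞) (Function.uncurry f)) (t x : ℝ) :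
    HasDerivAt (fun y => f t y) (pdx f t x) x := by
  rw [pdx_eq_fderiv hf]; exact hasDerivAt_slice_x hf t x

lemma contDiff_pdt (hf : ContDiff ℝ (⊤:ℕ∞) (Function.uncurry f)) :
    ContDiff ℝ (⊤:ℕ∞) (Function.uncurry (pdt f)) := by
  have h : Function.uncurry (pdt f)
      = fun p : ℝ × ℝ => fderiv ℝ (Function.uncurry f) p ((1 : ℝ), (0 : ℝ)) := by
    funext p
    exact pdt_eq_fderiv hf p.1 p.2
  rw [h]
  exact (hf.fderiv_right (mod_cast le_top)).clm_apply contDiff_const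

lemma contDiff_pdx (hf : ContDiff ℝ (⊤:ℕ∞) (Function.uncurry f)) :
    ContDiff ℝ (⊤:ℕ∞) (Function.uncurry (pdx f)) := by
  have h : Function.uncurry (pdx f)
      = fun p : ℝ × ℝ => fderiv ℝ (Function.uncurry f) p ((0 : ℝ), (1 : ℝ)) := by
    funext p
    exact pdx_eq_fderiv hf p.1 p.2
  rw [h]
  exact (hf.fderiv_right (mod_cast le_top)).clm_apply contDiff_const

/-- Slice of a smooth uncurried function. -/
lemma contDiff_slice (hf : ContDiff ℝ (⊤:ℕ∞) (Function.uncurry f)) (t : ℝ) :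
    ContDiff ℝ (⊤:ℕ∞) (fun y => f t y) :=
  hf.comp (contDiff_const.prodMk contDiff_id)

lemma periodic_eval {g : ℝ → ℝ} (hg : Function.Periodic g (2 * π)) : g π = g (-π) := by
  have h := hg (-π)
  rw [show -π + 2 * π = π by ring] at h
  exact h

lemma periodic_deriv' {g : ℝ → ℝ} (hg : Function.Periodic g (2 * π)) :
    deriv g π = deriv g (-π) := by
  have h : (fun x => g (x + 2 * π)) = g := funext fun x => hg x
  have h2 := deriv_comp_add_const g (2 * π) (-π)
  rw [h, show -π + 2 * π = π by ring] at h2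
  exact h2.symm

lemma continuous_slice_x (hf : ContDiff ℝ (⊤:ℕ∞) (Function.uncurry f)) (t : ℝ) :
    Continuous (fun y => f t y) :=
  (contDiff_slice hf t).continuous

/-- Differentiation of a parametric interval integral of a smooth function. -/
lemma hasDerivAt_param (hf : ContDiff ℝ (⊤:ℕ∞) (Function.uncurry f)) (a b t₀ : ℝ) :
    HasDerivAt (fun t => ∫ x in a..b, f t x) (∫ x in a..b, pdt f t₀ x) t₀ := by
  have hcont : Continuous (Function.uncurry (pdt f)) := (contDiff_pdt hf).continuous
  have hK : IsCompact (Icc (t₀ - 1) (t₀ + 1) ×ˢ uIcc a b) :=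
    (isCompact_Icc).prod isCompact_uIcc
  obtain ⟨M, hM⟩ := hK.exists_bound_of_continuousOn hcont.continuousOn
  refine (intervalIntegral.hasDerivAt_integral_of_dominated_loc_of_deriv_le
    (F := fun t x => f t x) (F' := fun t x => pdt f t x) (bound := fun _ => M)
    (Metric.ball_mem_nhds t₀ one_pos) ?_ ?_ ?_ ?_ ?_ ?_).2
  · exact Filter.Eventually.of_forall fun t =>
      (continuous_slice_x hf t).aestronglyMeasurable
  · exact (continuous_slice_x hf t₀).intervalIntegrable a b
  · exact (continuous_slice_x (contDiff_pdt hf) t₀).aestronglyMeasurable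
  · refine Filter.Eventually.of_forall fun x hx s hs => ?_
    have hx' : x ∈ uIcc a b := uIoc_subset_uIcc hx
    have hs' : s ∈ Icc (t₀ - 1) (t₀ + 1) := by
      rw [Metric.mem_ball, Real.dist_eq] at hs
      constructor <;> [linarith [abs_lt.mp hs]; linarith [(abs_lt.mp hs).2]]
    exact hM (s, x) ⟨hs', hx'⟩
  · exact intervalIntegrable_const
  · exact Filter.Eventually.of_forall fun x _ s _ => hasDerivAt_pdt hf s x

/-- Integral of a total derivative of a periodic smooth function over one period vanishes. -/
lemma integral_deriv_zero {g : ℝ → ℝ} (hg : ContDiff ℝ (⊤:ℕ∞) g) (hper : g π = g (-π)) :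
    (∫ x in (-π)..π, deriv g x) = 0 := by
  rw [intervalIntegral.integral_deriv_eq_sub
    (fun x _ => (hg.differentiable (by simp)).differentiableAt)
    ((hg.continuous_deriv (mod_cast le_top)).intervalIntegrable _ _), hper, sub_self]

end AuxLemmas

/-- The supremum of `|f|` over one period `Ω = [-π, π]`. -/
noncomputable def supNorm (f : ℝ → ℝ) : ℝ := sSup ((fun x => |f x|) '' Icc (-π) π)

/-- A classical solution of the 1-D Kolmogorov two-equation model of turbulence on `[0,T]`:
smooth, `2π`-periodic in space, `ω > 0`, satisfying the three equations pointwise. -/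
def IsKolmogorovSolution (ν α₁ α₂ α₃ α₄ T : ℝ) (u ω k : ℝ → ℝ → ℝ) : Prop :=
  ContDiff ℝ (⊤ : ℕ∞) (Function.uncurry u) ∧ ContDiff ℝ (⊤ : ℕ∞) (Function.uncurry ω) ∧
    ContDiff ℝ (⊤ : ℕ∞) (Function.uncurry k) ∧
    (∀ t, Function.Periodic (u t) (2 * π)) ∧
    (∀ t, Function.Periodic (ω t) (2 * π)) ∧
    (∀ t, Function.Periodic (k t) (2 * π)) ∧
    (∀ t x, 0 < ω t x) ∧
    (∀ t ∈ Icc (0 : ℝ) T, ∀ x : ℝ,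
      pdt u t x + u t x * pdx u t x
        - ν * deriv (fun y => k t y / ω t y * pdx u t y) x = 0) ∧
    (∀ t ∈ Icc (0 : ℝ) T, ∀ x : ℝ,
      pdt ω t x + u t x * pdx ω t x
        - α₁ * deriv (fun y => k t y / ω t y * pdx ω t y) x = -α₂ * (ω t x) ^ 2) ∧
    (∀ t ∈ Icc (0 : ℝ) T, ∀ x : ℝ,
      pdt k t x + u t x * pdx k t x
        - α₃ * deriv (fun y => k t y / ω t y * pdx k t y) x
        = -(k t x) * ω t x + α₄ * (k t x / ω t x) * (pdx u t x) ^ 2)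

theorem k_L1_estimate
    (ν α₁ α₂ α₃ α₄ T : ℝ) (hν : 0 < ν) (hα₁ : 0 < α₁) (hα₂ : 0 < α₂)
    (hα₃ : 0 < α₃) (hα₄ : 0 < α₄) (hT : 0 < T)
    (u ω k : ℝ → ℝ → ℝ)
    (hsol : IsKolmogorovSolution ν α₁ α₂ α₃ α₄ T u ω k)
    (hk : ∀ t ∈ Icc (0 : ℝ) T, ∀ x : ℝ, 0 ≤ k t x) :
    ∃ C : ℝ, 0 < C ∧ ∀ t ∈ Icc (0 : ℝ) T,
      (∫ x in (-π)..π, |k t x|)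
        + ∫ τ in (0 : ℝ)..t, ∫ x in (-π)..π, k τ x * ω τ x
      ≤ C * ((∫ x in (-π)..π, |k 0 x|) + ∫ x in (-π)..π, (u 0 x) ^ 2) := by

  obtain ⟨hu, hω, hk2, hpu, hpω, hpk, hωpos, hequ, -, heqk⟩ := hsol
  have hπ : (-π : ℝ) ≤ π := by linarith [pi_pos]
  have hne : ∀ p : ℝ × ℝ, Function.uncurry ω p ≠ 0 := fun p => (hωpos p.1 p.2).ne'
  have ha : ContDiff ℝ (⊤:ℕ∞) (Function.uncurry fun t x => k t x / ω t x) := hk2.div hω hne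
  have hpxu := contDiff_pdx hu
  have hpxk := contDiff_pdx hk2
  have hkω : ContDiff ℝ (⊤:ℕ∞) (Function.uncurry fun t x => k t x * ω t x) := hk2.mul hω
  have hu2 : ContDiff ℝ (⊤:ℕ∞) (Function.uncurry fun s y => (u s y) ^ 2) := hu.pow 2
  have hau : ContDiff ℝ (⊤:ℕ∞)
      (Function.uncurry fun t x => k t x / ω t x * pdx u t x) := ha.mul hpxu
  have hak : ContDiff ℝ (⊤:ℕ∞)
      (Function.uncurry fun t x => k t x / ω t x * pdx k t x) := ha.mul hpxk
  have huk : ContDiff ℝ (⊤:ℕ∞) (Function.uncurry fun t x => u t x * k t x) := hu.mul hk2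
  have hu3 : ContDiff ℝ (⊤:ℕ∞) (Function.uncurry fun t x => (u t x) ^ 3) := hu.pow 3
  have huau : ContDiff ℝ (⊤:ℕ∞)
      (Function.uncurry fun t x => u t x * (k t x / ω t x * pdx u t x)) := hu.mul hau
  set c : ℝ := (2 * α₄ + 1) / (4 * ν) with hc
  have hcpos : 0 < c := by rw [hc]; positivity
  have hGcont : Continuous (fun τ => ∫ x in (-π)..π, k τ x * ω τ x) :=
    Differentiable.continuous (fun τ => (hasDerivAt_param hkω (-π) π τ).differentiableAt)
  -- the key dissipation inequality
  have hkey : ∀ t ∈ Icc (0:ℝ) T,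
      (∫ x in (-π)..π, pdt k t x)
        + (1/2) * (∫ x in (-π)..π, k t x * ω t x)
        + c * (∫ x in (-π)..π, pdt (fun s y => (u s y) ^ 2) t x) ≤ 0 := by
    intro t ht
    have hkx : k t π = k t (-π) := periodic_eval (hpk t)
    have hωx : ω t π = ω t (-π) := periodic_eval (hpω t)
    have hux : u t π = u t (-π) := periodic_eval (hpu t)
    have hpux : pdx u t π = pdx u t (-π) := periodic_deriv' (hpu t)
    have hpkx : pdx k t π = pdx k t (-π) := periodic_deriv' (hpk t)
    have cu : Continuous (fun x => u t x) := continuous_slice_x hu t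
    have ck : Continuous (fun x => k t x) := continuous_slice_x hk2 t
    have cω : Continuous (fun x => ω t x) := continuous_slice_x hω t
    have cpu : Continuous (fun x => pdx u t x) := continuous_slice_x hpxu t
    have cpk : Continuous (fun x => pdx k t x) := continuous_slice_x hpxk t
    have ca : Continuous (fun x => k t x / ω t x) := continuous_slice_x ha t
    have cderiv_ak : Continuous (deriv (fun y => k t y / ω t y * pdx k t y)) :=
      (contDiff_slice hak t).continuous_deriv (mod_cast le_top)
    have cderiv_uk : Continuous (deriv (fun y => u t y * k t y)) :=
      (contDiff_slice huk t).continuous_deriv (mod_cast le_top)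
    have cderiv_u3 : Continuous (deriv (fun y => (u t y) ^ 3)) :=
      (contDiff_slice hu3 t).continuous_deriv (mod_cast le_top)
    have cderiv_uau : Continuous
        (deriv (fun y => u t y * (k t y / ω t y * pdx u t y))) :=
      (contDiff_slice huau t).continuous_deriv (mod_cast le_top)
    have I1 : (∫ x in (-π)..π, deriv (fun y => k t y / ω t y * pdx k t y) x) = 0 :=
      integral_deriv_zero (contDiff_slice hak t) (by simp only [hkx, hωx, hpkx])
    have I2 : (∫ x in (-π)..π, deriv (fun y => u t y * k t y) x) = 0 :=
      integral_deriv_zero (contDiff_slice huk t) (by simp only [hux, hkx])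
    have I3 : (∫ x in (-π)..π, deriv (fun y => (u t y) ^ 3) x) = 0 :=
      integral_deriv_zero (contDiff_slice hu3 t) (by simp only [hux])
    have I4 : (∫ x in (-π)..π,
        deriv (fun y => u t y * (k t y / ω t y * pdx u t y)) x) = 0 :=
      integral_deriv_zero (contDiff_slice huau t) (by simp only [hux, hkx, hωx, hpux])
    have dmul_uk : ∀ x, deriv (fun y => u t y * k t y) x
        = pdx u t x * k t x + u t x * pdx k t x :=
      fun x => ((hasDerivAt_pdx hu t x).mul (hasDerivAt_pdx hk2 t x)).deriv
    have du3 : ∀ x, deriv (fun y => (u t y) ^ 3) x = 3 * (u t x) ^ 2 * pdx u t x :=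
      fun x => by simpa using ((hasDerivAt_pdx hu t x).fun_pow 3).deriv
    have hdh : ∀ x, HasDerivAt (fun y => k t y / ω t y * pdx u t y)
        (deriv (fun y => k t y / ω t y * pdx u t y) x) x := fun x =>
      (((contDiff_slice hau t).differentiable (by simp)) x).hasDerivAt
    have dmul_uh : ∀ x, deriv (fun y => u t y * (k t y / ω t y * pdx u t y)) x
        = pdx u t x * (k t x / ω t x * pdx u t x)
          + u t x * deriv (fun y => k t y / ω t y * pdx u t y) x :=
      fun x => ((hasDerivAt_pdx hu t x).mul (hdh x)).deriv
    -- Step A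
    have intA : (∫ x in (-π)..π, pdt k t x)
        = (∫ x in (-π)..π, k t x * pdx u t x)
          - (∫ x in (-π)..π, k t x * ω t x)
          + α₄ * ∫ x in (-π)..π, k t x / ω t x * (pdx u t x) ^ 2 := by
      have e1 : EqOn (fun x => pdt k t x)
          (fun x => (k t x * pdx u t x - deriv (fun y => u t y * k t y) x)
            + α₃ * deriv (fun y => k t y / ω t y * pdx k t y) x
            + (-(k t x * ω t x) + α₄ * (k t x / ω t x * (pdx u t x) ^ 2)))
          (uIcc (-π) π) := by
        intro x _
        have h1 := heqk t ht x
        have h2 := dmul_uk x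
        simp only
        linear_combination h1 + h2
      have iA1 : Continuous (fun x => k t x * pdx u t x
          - deriv (fun y => u t y * k t y) x) := (ck.mul cpu).sub cderiv_uk
      have iA2 : Continuous (fun x =>
          α₃ * deriv (fun y => k t y / ω t y * pdx k t y) x) := continuous_const.mul cderiv_ak
      have iA3 : Continuous (fun x => -(k t x * ω t x)
          + α₄ * (k t x / ω t x * (pdx u t x) ^ 2)) :=
        ((ck.mul cω).neg).add (continuous_const.mul (ca.mul (cpu.pow 2)))
      rw [intervalIntegral.integral_congr e1,
        intervalIntegral.integral_add ((iA1.fun_add iA2).intervalIntegrable _ _)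
          (iA3.intervalIntegrable _ _),
        intervalIntegral.integral_add (iA1.intervalIntegrable _ _)
          (iA2.intervalIntegrable _ _),
        intervalIntegral.integral_sub ((ck.fun_mul cpu).intervalIntegrable _ _)
          (cderiv_uk.intervalIntegrable _ _),
        intervalIntegral.integral_const_mul,
        intervalIntegral.integral_add (((ck.fun_mul cω).fun_neg).intervalIntegrable _ _)
          ((continuous_const.fun_mul (ca.fun_mul (cpu.fun_pow 2))).intervalIntegrable _ _),
        intervalIntegral.integral_neg, intervalIntegral.integral_const_mul,
        I1, I2]
      ring
    -- Step B (energy identity)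
    have intB : (∫ x in (-π)..π, pdt (fun s y => (u s y) ^ 2) t x)
        = -(2*ν) * ∫ x in (-π)..π, k t x / ω t x * (pdx u t x) ^ 2 := by
      have e2 : EqOn (fun x => pdt (fun s y => (u s y) ^ 2) t x)
          (fun x => (-(2/3)) * deriv (fun y => (u t y) ^ 3) x
            + 2 * ν * (deriv (fun y => u t y * (k t y / ω t y * pdx u t y)) x
              - k t x / ω t x * (pdx u t x) ^ 2))
          (uIcc (-π) π) := by
        intro x _
        have hptu2 : pdt (fun s y => (u s y) ^ 2) t x = 2 * u t x * pdt u t x := by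
          have h := ((hasDerivAt_pdt hu t x).fun_pow 2).deriv
          simpa [pdt] using h
        have h1 := hequ t ht x
        simp only
        linear_combination hptu2 + 2 * u t x * h1 + (2/3) * du3 x - 2 * ν * dmul_uh x
      have iB1 : Continuous (fun x => (-(2/3 : ℝ)) * deriv (fun y => (u t y) ^ 3) x) :=
        continuous_const.mul cderiv_u3
      have iB2 : Continuous (fun x =>
          (2 : ℝ) * ν * (deriv (fun y => u t y * (k t y / ω t y * pdx u t y)) x
            - k t x / ω t x * (pdx u t x) ^ 2)) :=
        continuous_const.mul (cderiv_uau.sub (ca.mul (cpu.pow 2)))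
      rw [intervalIntegral.integral_congr e2,
        intervalIntegral.integral_add (iB1.intervalIntegrable _ _)
          (iB2.intervalIntegrable _ _),
        intervalIntegral.integral_const_mul, intervalIntegral.integral_const_mul,
        intervalIntegral.integral_sub (cderiv_uau.intervalIntegrable _ _)
          ((ca.fun_mul (cpu.fun_pow 2)).intervalIntegrable _ _),
        I3, I4]
      ring
    -- Step C (Young inequality)
    have intC : (∫ x in (-π)..π, k t x * pdx u t x)
        ≤ (1/2) * (∫ x in (-π)..π, k t x / ω t x * (pdx u t x) ^ 2)
          + (1/2) * (∫ x in (-π)..π, k t x * ω t x) := by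
      have hmono : (∫ x in (-π)..π, k t x * pdx u t x)
          ≤ ∫ x in (-π)..π, ((1/2) * (k t x / ω t x * (pdx u t x) ^ 2)
            + (1/2) * (k t x * ω t x)) := by
        apply intervalIntegral.integral_mono_on hπ
          ((ck.fun_mul cpu).intervalIntegrable _ _)
          (((continuous_const.fun_mul (ca.fun_mul (cpu.fun_pow 2))).fun_add
            (continuous_const.fun_mul (ck.fun_mul cω))).intervalIntegrable _ _)
        intro x _
        have hW := hωpos t x
        have hK := hk t ht x
        have key : (1/2) * (k t x / ω t x * (pdx u t x) ^ 2) + (1/2) * (k t x * ω t x)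
            - k t x * pdx u t x
            = k t x * (pdx u t x - ω t x) ^ 2 / (2 * ω t x) := by
          field_simp
          ring
        have h2 : 0 ≤ k t x * (pdx u t x - ω t x) ^ 2 / (2 * ω t x) := by positivity
        linarith
      rw [intervalIntegral.integral_add ((continuous_const.fun_mul (ca.fun_mul (cpu.fun_pow 2))).intervalIntegrable _ _)
        ((continuous_const.fun_mul (ck.fun_mul cω)).intervalIntegrable _ _),
        intervalIntegral.integral_const_mul, intervalIntegral.integral_const_mul] at hmono
      exact hmono
    have hcν : c * (2 * ν) = α₄ + 1/2 := by rw [hc]; field_simp; ring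
    have h5 : c * (-(2*ν) * (∫ x in (-π)..π, k t x / ω t x * (pdx u t x) ^ 2))
        = -((α₄ + 1/2) * ∫ x in (-π)..π, k t x / ω t x * (pdx u t x) ^ 2) := by
      linear_combination (-(∫ x in (-π)..π, k t x / ω t x * (pdx u t x) ^ 2)) * hcν
    rw [intB, h5]
    linarith [intA, intC]
  -- differentiability of the Lyapunov functional
  have hΨder : ∀ t : ℝ, HasDerivAt (fun s => (∫ x in (-π)..π, k s x)
      + (1/2) * (∫ τ in (0:ℝ)..s, ∫ x in (-π)..π, k τ x * ω τ x)
      + c * (∫ x in (-π)..π, (u s x) ^ 2))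
      ((∫ x in (-π)..π, pdt k t x)
        + (1/2) * (∫ x in (-π)..π, k t x * ω t x)
        + c * (∫ x in (-π)..π, pdt (fun s y => (u s y) ^ 2) t x)) t := by
    intro t
    refine ((hasDerivAt_param hk2 _ _ t).add
      (HasDerivAt.const_mul (1/2 : ℝ) ?_)).add
      (HasDerivAt.const_mul c ?_)
    · exact (hGcont.integral_hasStrictDerivAt 0 t).hasDerivAt
    · exact hasDerivAt_param hu2 _ _ t
  have hanti : AntitoneOn (fun s => (∫ x in (-π)..π, k s x)
      + (1/2) * (∫ τ in (0:ℝ)..s, ∫ x in (-π)..π, k τ x * ω τ x)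
      + c * (∫ x in (-π)..π, (u s x) ^ 2)) (Icc 0 T) := by
    apply antitoneOn_of_deriv_nonpos (convex_Icc 0 T)
    · exact (Differentiable.continuous (fun s => (hΨder s).differentiableAt)).continuousOn
    · intro x hx
      exact (hΨder x).differentiableAt.differentiableWithinAt
    · intro x hx
      rw [interior_Icc] at hx
      rw [(hΨder x).deriv]
      exact hkey x ⟨hx.1.le, hx.2.le⟩
  refine ⟨2 + 2*c, by positivity, fun t ht => ?_⟩
  have h0 : (0:ℝ) ∈ Icc (0:ℝ) T := ⟨le_refl 0, hT.le⟩
  have habs : ∀ s ∈ Icc (0:ℝ) T, (∫ x in (-π)..π, |k s x|) = ∫ x in (-π)..π, k s x :=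
    fun s hs => intervalIntegral.integral_congr fun x _ => abs_of_nonneg (hk s hs x)
  have hmono : (∫ x in (-π)..π, k t x)
      + (1/2) * (∫ τ in (0:ℝ)..t, ∫ x in (-π)..π, k τ x * ω τ x)
      + c * (∫ x in (-π)..π, (u t x) ^ 2)
      ≤ (∫ x in (-π)..π, k 0 x)
      + (1/2) * (∫ τ in (0:ℝ)..(0:ℝ), ∫ x in (-π)..π, k τ x * ω τ x)
      + c * (∫ x in (-π)..π, (u 0 x) ^ 2) := hanti h0 ht ht.1
  rw [intervalIntegral.integral_same] at hmono
  have hFt : 0 ≤ ∫ x in (-π)..π, k t x :=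
    intervalIntegral.integral_nonneg hπ fun x _ => hk t ht x
  have hF0 : 0 ≤ ∫ x in (-π)..π, k 0 x :=
    intervalIntegral.integral_nonneg hπ fun x _ => hk 0 h0 x
  have hPh0 : 0 ≤ ∫ x in (-π)..π, (u 0 x) ^ 2 :=
    intervalIntegral.integral_nonneg hπ fun x _ => sq_nonneg _
  have hPht : 0 ≤ ∫ x in (-π)..π, (u t x) ^ 2 :=
    intervalIntegral.integral_nonneg hπ fun x _ => sq_nonneg _
  have h6 : 0 ≤ c * ∫ x in (-π)..π, (u t x) ^ 2 := mul_nonneg hcpos.le hPht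
  have h8 : 0 ≤ c * ∫ x in (-π)..π, k 0 x := mul_nonneg hcpos.le hF0
  rw [habs t ht, habs 0 h0]
  nlinarith [hmono, hFt, hF0, hPh0, h6, h8, hcpos]
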